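/- arXiv:2508.07368 — 2 statements merged into one kernel-verified Lean document; each statement's English description precedes it below -/
import Mathlib

section
/- The K-adaptability value for a finite uncertainty set U equals the minimum over all partitions of U into at most K nonempty parts of the maximum over parts P of the robust value inf_{x ∈ X} max_{ξ ∈ P} f(x, ξ). -/
/-!
Sending each scenario to a policy that is best for it turns `K` policies into a clustering
that is no worse, and choosing a robust minimizer on each part turns a clustering into `K`
policies that are no worse; so each infimum bounds the other.
-/

section KAdaptability

variable {X U ι α : Type*} [ConditionallyCompleteLinearOrder α] [Finite X] [Finite U] [Finite ι]

theorem exists_clustering_le_of_policies [Nonempty ι] [Nonempty U] (f : X → U → α)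
    (xs : ι → X) :
    ∃ c : U → ι, (⨆ ξ : U, ⨅ x : X, ⨆ ζ : {ζ : U // c ζ = c ξ}, f x ζ.1)
      ≤ ⨆ ξ : U, ⨅ i : ι, f (xs i) ξ := by
  choose c hc using fun ξ : U => Finite.exists_min fun i => f (xs i) ξ
  refine ⟨c, ciSup_le fun ξ => ?_⟩
  have : Nonempty {ζ : U // c ζ = c ξ} := ⟨⟨ξ, rfl⟩⟩
  calc (⨅ x : X, ⨆ ζ : {ζ : U // c ζ = c ξ}, f x ζ.1)
      ≤ ⨆ ζ : {ζ : U // c ζ = c ξ}, f (xs (c ξ)) ζ.1 := ciInf_le (Finite.bddBelow_range _) _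
    _ ≤ ⨆ ξ : U, ⨅ i : ι, f (xs i) ξ := ciSup_le fun ⟨ζ, hζ⟩ => by
      change f (xs (c ξ)) ζ ≤ _
      rw [← hζ]
      exact le_ciSup_of_le (Finite.bddAbove_range _) ζ (le_ciInf (hc ζ))

theorem exists_policies_le_of_clustering [Nonempty X] [Nonempty U] (f : X → U → α)
    (c : U → ι) :
    ∃ xs : ι → X, (⨆ ξ : U, ⨅ i : ι, f (xs i) ξ)
      ≤ ⨆ ξ : U, ⨅ x : X, ⨆ ζ : {ζ : U // c ζ = c ξ}, f x ζ.1 := by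
  choose xs hxs using fun i : ι => Finite.exists_min fun x => ⨆ ζ : {ζ : U // c ζ = i}, f x ζ.1
  refine ⟨xs, ciSup_le fun ξ => ?_⟩
  calc (⨅ i : ι, f (xs i) ξ)
      ≤ f (xs (c ξ)) ξ := ciInf_le (Finite.bddBelow_range _) _
    _ ≤ ⨆ ζ : {ζ : U // c ζ = c ξ}, f (xs (c ξ)) ζ.1 :=
      le_ciSup (f := fun ζ : {ζ : U // c ζ = c ξ} => f (xs (c ξ)) ζ.1)
        (Finite.bddAbove_range _) ⟨ξ, rfl⟩
    _ ≤ ⨅ x : X, ⨆ ζ : {ζ : U // c ζ = c ξ}, f x ζ.1 := le_ciInf (hxs (c ξ))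
    _ ≤ ⨆ ξ' : U, ⨅ x : X, ⨆ ζ : {ζ : U // c ζ = c ξ'}, f x ζ.1 :=
      le_ciSup (f := fun ξ' : U => ⨅ x : X, ⨆ ζ : {ζ : U // c ζ = c ξ'}, f x ζ.1)
        (Finite.bddAbove_range _) ξ

end KAdaptability

/-- The `K`-adaptability value equals the minimum over clusterings of `U` into at most
`K` parts of the maximum over parts of the robust value of that part. A clustering is
encoded as a map `c : U → Fin K`; the part containing `ξ` is the fiber of `c ξ`. -/
theorem stmt_3 {X U : Type*} [Fintype X] [Nonempty X] [Fintype U] [Nonempty U]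
    (f : X → U → ℝ) (K : ℕ) (hK : 1 ≤ K) :
    (⨅ xs : Fin K → X, ⨆ ξ : U, ⨅ i : Fin K, f (xs i) ξ)
      = ⨅ c : U → Fin K, ⨆ ξ : U, ⨅ x : X, ⨆ ξ' : {ζ : U // c ζ = c ξ}, f x ξ'.1 := by
  have : Nonempty (Fin K) := ⟨⟨0, hK⟩⟩
  exact le_antisymm
    (ciInf_mono_of_forall_exists (Finite.bddBelow_range _)
      (exists_policies_le_of_clustering f))
    (ciInf_mono_of_forall_exists (Finite.bddBelow_range _)
      (exists_clustering_le_of_policies f))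
end

section
/- In the hitting-set reduction instance, the K-adaptability problem value is 0 if and only if the hitting set instance has a hitting set of size at most K. Specifically, given items I = {1,...,n} and subsets S_1,...,S_T ⊆ I, define for each l a matrix D^l ∈ ℝ^{(n+1)×n} with D^l_{jj} = 0 if j ∈ S_l and D^l_{jj} = 1 otherwise, all other entries in the first n rows zero, and the (n+1)-th row all ones. Then min over x^1,...,x^K ∈ ℝ^n_{≥0} of max over l ∈ {1,...,T} of min over {i : Σ_j x^i_j ≥ 1} of Σ_j D^l_{jj} x^i_j equals 0 if and only if there exists H ⊆ I with |H| ≤ K such that H ∩ S_l ≠ ∅ for all l. -/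
/-!
A hitting set of size at most `K` is the same as a map `f : Fin K → I` whose image meets every
`S_l`. All values are `≥ 0`, and the point masses `x^i = e_{f i}` have value `0`. Conversely, every
feasible `x^i` has a coordinate `j_i` with `x^i_{j_i} ≥ 1/n`; if `i ↦ j_i` is not such a map, some
`S_l` misses every `j_i`, so in scenario `l` each `x^i` costs at least `1/n`, and the value is `≥ 1/n`.
-/

open Finset

variable {α κ τ : Type*}

theorem exists_inv_card_le_of_one_le_sum [Fintype α] [Nonempty α] {y : α → ℝ}
    (hy : 1 ≤ ∑ j, y j) : ∃ j, 1 / (Fintype.card α : ℝ) ≤ y j := by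
  have hconst : ∑ _j : α, 1 / (Fintype.card α : ℝ) = 1 := by
    simp [Finset.card_univ, Fintype.card_ne_zero]
  obtain ⟨j, -, hj⟩ := exists_le_of_sum_le univ_nonempty (hconst.le.trans hy)
  exact ⟨j, hj⟩

section Adaptability

variable [DecidableEq α]

theorem exists_hittingSet_card_le_iff [Fintype κ] [Nonempty α] (S : τ → Finset α) :
    (∃ H : Finset α, H.card ≤ Fintype.card κ ∧ ∀ l, (H ∩ S l).Nonempty) ↔
      ∃ f : κ → α, ∀ l, ∃ i, f i ∈ S l := by
  constructor
  · rintro ⟨H, hcard, hhit⟩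
    obtain ⟨e⟩ := Function.Embedding.nonempty_of_card_le (α := H) (β := κ) (by simpa using hcard)
    refine ⟨Function.extend e Subtype.val (fun _ => Classical.arbitrary α), fun l => ?_⟩
    obtain ⟨a, ha⟩ := hhit l
    rw [mem_inter] at ha
    exact ⟨e ⟨a, ha.1⟩, by rw [e.injective.extend_apply]; exact ha.2⟩
  · rintro ⟨f, hf⟩
    refine ⟨univ.image f, card_image_le.trans (by simp), fun l => ?_⟩
    obtain ⟨i, hi⟩ := hf l
    exact ⟨f i, mem_inter.mpr ⟨mem_image_of_mem f (mem_univ i), hi⟩⟩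

def hittingCost (S : τ → Finset α) (l : τ) (j : α) : ℝ :=
  if j ∈ S l then 0 else 1

theorem hittingCost_nonneg (S : τ → Finset α) (l : τ) (j : α) : 0 ≤ hittingCost S l j := by
  unfold hittingCost; split_ifs <;> norm_num

variable [Fintype α]

noncomputable def adaptabilityValue (S : τ → Finset α) (x : κ → α → ℝ) : ℝ :=
  ⨆ l, ⨅ i, ∑ j, hittingCost S l j * x i j

theorem adaptabilityValue_nonneg (S : τ → Finset α) {x : κ → α → ℝ} (hx : ∀ i j, 0 ≤ x i j) :
    0 ≤ adaptabilityValue S x :=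
  Real.iSup_nonneg fun _ => Real.iInf_nonneg fun i =>
    sum_nonneg fun j _ => mul_nonneg (hittingCost_nonneg S _ j) (hx i j)

theorem adaptabilityValue_pi_single [Finite κ] {S : τ → Finset α} {f : κ → α}
    (hf : ∀ l, ∃ i, f i ∈ S l) :
    adaptabilityValue S (fun i => (Pi.single (f i) 1 : α → ℝ)) = 0 := by
  have hmin : ∀ l, ⨅ i, hittingCost S l (f i) = 0 := fun l => by
    obtain ⟨i, hi⟩ := hf l
    refine le_antisymm ?_ (Real.iInf_nonneg fun i => hittingCost_nonneg S l (f i))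
    exact (Finite.ciInf_le _ i).trans_eq (if_pos hi)
  simp [adaptabilityValue, Pi.single_apply, hmin]

theorem inv_card_le_adaptabilityValue [Nonempty α] [Finite τ] [Nonempty κ] {S : τ → Finset α}
    (hS : ∀ f : κ → α, ∃ l, ∀ i, f i ∉ S l) {x : κ → α → ℝ} (hx : ∀ i j, 0 ≤ x i j)
    (hx1 : ∀ i, 1 ≤ ∑ j, x i j) :
    1 / (Fintype.card α : ℝ) ≤ adaptabilityValue S x := by
  choose f hf using fun i => exists_inv_card_le_of_one_le_sum (hx1 i)
  obtain ⟨l, hl⟩ := hS f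
  have hrow : ∀ i, 1 / (Fintype.card α : ℝ) ≤ ∑ j, hittingCost S l j * x i j := fun i =>
    calc 1 / (Fintype.card α : ℝ) ≤ x i (f i) := hf i
      _ = hittingCost S l (f i) * x i (f i) := by rw [hittingCost, if_neg (hl i), one_mul]
      _ ≤ ∑ j, hittingCost S l j * x i j :=
        single_le_sum (fun j _ => mul_nonneg (hittingCost_nonneg S l j) (hx i j)) (mem_univ _)
  exact (le_ciInf hrow).trans (Finite.le_ciSup (fun l => ⨅ i, ∑ j, hittingCost S l j * x i j) l)

end Adaptability

theorem stmt_4_general (n T K : ℕ) (hn : 0 < n) (hK : 0 < K)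
    (S : Fin T → Finset (Fin n)) :
    sInf {r : ℝ | ∃ x : Fin K → Fin n → ℝ,
        (∀ i j, 0 ≤ x i j) ∧ (∀ i, 1 ≤ ∑ j, x i j) ∧
        r = ⨆ l : Fin T, ⨅ i : Fin K,
              ∑ j, (if j ∈ S l then (0 : ℝ) else 1) * x i j} = 0
      ↔ ∃ H : Finset (Fin n), H.card ≤ K ∧ ∀ l, (H ∩ S l).Nonempty := by
  have : NeZero n := ⟨hn.ne'⟩
  have : NeZero K := ⟨hK.ne'⟩
  have hhitting := exists_hittingSet_card_le_iff (κ := Fin K) S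
  rw [Fintype.card_fin] at hhitting
  rw [hhitting]
  set A : Set ℝ := {r | ∃ x : Fin K → Fin n → ℝ, (∀ i j, 0 ≤ x i j) ∧ (∀ i, 1 ≤ ∑ j, x i j) ∧
    r = adaptabilityValue S x}
  change sInf A = 0 ↔ _
  have hsingle : ∀ f : Fin K → Fin n, (∀ i j, 0 ≤ (Pi.single (f i) 1 : Fin n → ℝ) j) ∧
      ∀ i, 1 ≤ ∑ j, (Pi.single (f i) 1 : Fin n → ℝ) j := fun f =>
    ⟨fun _ _ => by rw [Pi.single_apply]; split_ifs <;> norm_num, fun _ => by simp⟩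
  have hA0 : 0 ∈ lowerBounds A := by
    rintro _ ⟨x, hx, -, rfl⟩
    exact adaptabilityValue_nonneg S hx
  constructor
  · intro hA
    by_contra! hS
    have hA_ne : A.Nonempty := ⟨_, _, (hsingle 0).1, (hsingle 0).2, rfl⟩
    have : 1 / (n : ℝ) ≤ sInf A := le_csInf hA_ne fun r ⟨x, hx, hx1, hr⟩ => by
      simpa [hr] using inv_card_le_adaptabilityValue hS hx hx1
    rw [hA] at this
    have : (0 : ℝ) < 1 / n := by positivity
    linarith
  · rintro ⟨f, hf⟩
    exact IsLeast.csInf_eq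
      ⟨⟨_, (hsingle f).1, (hsingle f).2, (adaptabilityValue_pi_single hf).symm⟩, hA0⟩

/-- Hitting-set reduction: the `K`-adaptability value of the constructed instance is `0`
iff there is a hitting set of size at most `K`. -/
theorem stmt_4 (n T K : ℕ) (hn : 0 < n) (hT : 0 < T) (hK : 0 < K)
    (S : Fin T → Finset (Fin n)) :
    sInf {r : ℝ | ∃ x : Fin K → Fin n → ℝ,
        (∀ i j, 0 ≤ x i j) ∧ (∀ i, 1 ≤ ∑ j, x i j) ∧
        r = ⨆ l : Fin T, ⨅ i : Fin K,
              ∑ j, (if j ∈ S l then (0 : ℝ) else 1) * x i j} = 0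
      ↔ ∃ H : Finset (Fin n), H.card ≤ K ∧ ∀ l, (H ∩ S l).Nonempty :=
  stmt_4_general n T K hn hK S
end
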